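/- arXiv:2107.12694 — 2 statements merged into one kernel-verified Lean document; each statement's English description precedes it below -/
import Mathlib

section
/- Let λ ∈ (0, 1/2), β ≥ 0, γ > 0, and T > 0. (a) The singular initial value problem μ(0) = 0, μ′(s) = γ²/((2λ+1)·μ(s)) + β for s ∈ (0, T], has a unique solution μ⁰ : [0, T] → [0, ∞) that is continuous on [0, T], strictly increasing, positive on (0, T], and differentiable on (0, T]. (b) For each ε > 0, let μ_ε : [0, T] → ℝ be the unique solution of μ_ε(0) = ε, μ_ε′(s) = ε·μ_ε(s) + γ²·(1+ε)^{2λ+2}/((2λ+1)·μ_ε(s)) + ε + β on [0, T]. Then for all 0 < ε₁ ≤ ε₂ and all s ∈ [0, T] one has μ_{ε₁}(s) ≤ μ_{ε₂}(s), and for every s ∈ [0, T], μ_ε(s) → μ⁰(s) as ε → 0⁺. -/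
/-- A solution of the singular initial value problem (4.14):
`μ(0) = 0`, `μ′(s) = γ²/((2λ+1)·μ(s)) + β` on `(0, T]`, with `μ` continuous on `[0,T]`,
strictly increasing, nonnegative, and positive on `(0, T]`. -/
def IsSingularSol (lam β γ T : ℝ) (μ : ℝ → ℝ) : Prop :=
  ContinuousOn μ (Set.Icc 0 T) ∧ StrictMonoOn μ (Set.Icc 0 T) ∧ μ 0 = 0 ∧
    (∀ s ∈ Set.Icc 0 T, 0 ≤ μ s) ∧ (∀ s ∈ Set.Ioc 0 T, 0 < μ s) ∧
    ∀ s ∈ Set.Ioc 0 T,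
      HasDerivWithinAt μ (γ ^ 2 / ((2 * lam + 1) * μ s) + β) (Set.Icc 0 T) s

/-- A solution of the initial value problem (4.12) with initial value `ε`:
`μ(0) = ε`, `μ′(s) = ε·μ(s) + γ²(1+ε)^{2λ+2}/((2λ+1)·μ(s)) + ε + β` on `[0, T]`. -/
def IsEpsSol (lam β γ T ε : ℝ) (μ : ℝ → ℝ) : Prop :=
  μ 0 = ε ∧ (∀ s ∈ Set.Icc 0 T, 0 < μ s) ∧
    ∀ s ∈ Set.Icc 0 T,
      HasDerivWithinAt μ
        (ε * μ s + γ ^ 2 * (1 + ε) ^ (2 * lam + 2) / ((2 * lam + 1) * μ s) + ε + β)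
        (Set.Icc 0 T) s

/-!
Separating variables, the singular problem `μ μ' = c + β μ` with `c = γ² / (2λ + 1)` is solved
by the inverse of `S u = ∫₀ᵘ x / (c + β x) dx`, which increases from `0` to `∞`.

Everything else is a comparison principle: if `f a ≤ g a` and `f' - g' ≤ L (f - g)` wherever
`f > g`, then `f ≤ g` (look at `(f - g) e^{-L s}` after the last point where `f ≤ g`). As the
right-hand sides decrease in `μ` and increase in `ε`, this gives uniqueness of `μ⁰`, monotonicity
of `μ_ε` in `ε` and `μ⁰ ≤ μ_ε`. From above, `e^{ε s} ((1 + ε)^{λ+1} μ⁰ s + ε + ε s)` is a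
supersolution of the `ε`-problem tending to `μ⁰ s` as `ε → 0`, so `μ_ε s → μ⁰ s` by squeezing.
-/

open Set Filter Topology

section Comparison

variable {a b : ℝ}

theorem nonpos_of_hasDerivAt_nonpos_of_pos {h h' : ℝ → ℝ} (hc : ContinuousOn h (Icc a b))
    (hd : ∀ x ∈ Ioo a b, HasDerivAt h (h' x) x) (ha : h a ≤ 0)
    (hh' : ∀ x ∈ Ioo a b, 0 < h x → h' x ≤ 0) : ∀ x ∈ Icc a b, h x ≤ 0 := by
  intro x hx
  by_contra! hpos
  have hcx : ContinuousOn h (Icc a x) := hc.mono (Icc_subset_Icc_right hx.2)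
  -- `y` is the last point before `x` where `h` is nonpositive; `h` decreases on `[y, x]`.
  obtain ⟨y, ⟨hya, hy0⟩, hymax⟩ : ∃ y, IsGreatest (Icc a x ∩ h ⁻¹' Iic 0) y :=
    (isCompact_Icc.of_isClosed_subset
      (hcx.preimage_isClosed_of_isClosed isClosed_Icc isClosed_Iic)
      inter_subset_left).exists_isGreatest ⟨a, ⟨le_rfl, hx.1⟩, ha⟩
  have hyx : y < x := hya.2.lt_of_ne (by rintro rfl; exact hpos.not_ge hy0)
  have hsub : Ioo y x ⊆ Ioo a b := Ioo_subset_Ioo hya.1 hx.2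
  have hanti : AntitoneOn h (Icc y x) := by
    refine antitoneOn_of_hasDerivWithinAt_nonpos (convex_Icc y x)
      (hcx.mono (Icc_subset_Icc_left hya.1)) (fun z hz => ?_) (fun z hz => ?_) (f' := h')
    all_goals rw [interior_Icc] at hz
    · exact (hd z (hsub hz)).hasDerivWithinAt
    · refine hh' z (hsub hz) (not_le.1 fun hz0 => ?_)
      exact hz.1.not_ge (hymax ⟨⟨hya.1.trans hz.1.le, hz.2.le⟩, hz0⟩)
  exact hpos.not_ge ((hanti ⟨le_rfl, hyx.le⟩ ⟨hyx.le, le_rfl⟩ hyx.le).trans hy0)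

theorem le_of_hasDerivAt_of_sub_le_mul_sub {f g F G : ℝ → ℝ} {L : ℝ}
    (hf : ContinuousOn f (Icc a b)) (hg : ContinuousOn g (Icc a b))
    (hfd : ∀ x ∈ Ioo a b, HasDerivAt f (F x) x) (hgd : ∀ x ∈ Ioo a b, HasDerivAt g (G x) x)
    (ha : f a ≤ g a) (hFG : ∀ x ∈ Ioo a b, g x < f x → F x - G x ≤ L * (f x - g x)) :
    ∀ x ∈ Icc a b, f x ≤ g x := by
  have hd : ∀ x ∈ Ioo a b, HasDerivAt (fun x => (f x - g x) * Real.exp (-L * x))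
      ((F x - G x - L * (f x - g x)) * Real.exp (-L * x)) x := fun x hx => by
    have hexp := ((hasDerivAt_id x).const_mul (-L)).exp
    exact (((hfd x hx).sub (hgd x hx)).mul hexp).congr_deriv
      (by simp only [id, Pi.sub_apply]; ring)
  intro x hx
  have := nonpos_of_hasDerivAt_nonpos_of_pos ((hf.sub hg).mul (by fun_prop)) hd
    (mul_nonpos_of_nonpos_of_nonneg (sub_nonpos.2 ha) (Real.exp_pos _).le)
    (fun y hy hpos => ?_) x hx
  · exact sub_nonpos.1 (nonpos_of_mul_nonpos_left this (Real.exp_pos _))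
  · have hgf : g y < f y := sub_pos.1 (pos_of_mul_pos_left hpos (Real.exp_pos _).le)
    exact mul_nonpos_of_nonpos_of_nonneg (by linarith [hFG y hy hgf]) (Real.exp_pos _).le

end Comparison

theorem exists_inverse_of_strictMonoOn_Ici {S φ : ℝ → ℝ} (hS : StrictMonoOn S (Ici 0))
    (hS0 : S 0 = 0) (hSsurj : SurjOn S (Ici 0) (Ici 0)) (hSd : ∀ u > 0, HasDerivAt S (φ u) u)
    (hφ : ∀ u > 0, φ u ≠ 0) :
    ∃ μ : ℝ → ℝ, ContinuousOn μ (Ici 0) ∧ StrictMonoOn μ (Ici 0) ∧ μ 0 = 0 ∧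
      ∀ s > 0, HasDerivAt μ (φ (μ s))⁻¹ s := by
  set μ := Function.invFunOn S (Ici (0 : ℝ))
  have hmaps : MapsTo μ (Ici 0) (Ici 0) := hSsurj.mapsTo_invFunOn
  have hright : RightInvOn μ S (Ici 0) := hSsurj.rightInvOn_invFunOn
  have hleft : LeftInvOn μ S (Ici 0) := hS.injOn.leftInvOn_invFunOn
  have hμ0 : μ 0 = 0 := by simpa [hS0] using hleft (mem_Ici.2 le_rfl)
  have hμm : StrictMonoOn μ (Ici 0) := fun x hx y hy hxy => by
    rw [← hS.lt_iff_lt (hmaps hx) (hmaps hy), hright hx, hright hy]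
    exact hxy
  have himg : Ici 0 ⊆ μ '' Ici 0 := fun x hx =>
    ⟨S x, by simpa [hS0] using hS.monotoneOn (mem_Ici.2 le_rfl) hx hx, hleft hx⟩
  have hμpos : ∀ s > 0, 0 < μ s := fun s hs => hμ0 ▸ hμm (mem_Ici.2 le_rfl) (mem_Ici.2 hs.le) hs
  have hcont : ∀ s > 0, ContinuousAt μ s := fun s hs =>
    hμm.continuousAt_of_image_mem_nhds (Ici_mem_nhds hs)
      (mem_of_superset (Ici_mem_nhds (hμpos s hs)) himg)
  refine ⟨μ, fun s hs => ?_, hμm, hμ0, fun s hs => ?_⟩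
  · rcases (mem_Ici.1 hs).eq_or_lt with rfl | hs
    · exact hμm.continuousWithinAt_right_of_image_mem_nhdsWithin self_mem_nhdsWithin
        (mem_of_superset (by rw [hμ0]; exact self_mem_nhdsWithin) himg)
    · exact (hcont s hs).continuousWithinAt
  · exact HasDerivAt.of_local_left_inverse (hcont s hs) (hSd _ (hμpos s hs)) (hφ _ (hμpos s hs))
      (eventually_of_mem (Ici_mem_nhds hs) fun y hy => hright (mem_Ici.2 hy))

theorem exists_singular_solution {c β : ℝ} (hc : 0 < c) (hβ : 0 ≤ β) :
    ∃ μ : ℝ → ℝ, ContinuousOn μ (Ici 0) ∧ StrictMonoOn μ (Ici 0) ∧ μ 0 = 0 ∧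
      ∀ s > 0, HasDerivAt μ (c / μ s + β) s := by
  -- The absolute value only makes the integrand continuous on all of `ℝ`.
  set φ : ℝ → ℝ := fun x => x / (c + β * |x|)
  have hden : ∀ x, 0 < c + β * |x| := fun x => by positivity
  have hφc : Continuous φ := continuous_id.div (by fun_prop) fun x => (hden x).ne'
  set S : ℝ → ℝ := fun u => ∫ x in (0 : ℝ)..u, φ x
  have hSd : ∀ u, HasDerivAt S (φ u) u := fun u => (hφc.integral_hasStrictDerivAt 0 u).hasDerivAt
  have hSc : Continuous S := continuous_iff_continuousAt.2 fun u => (hSd u).continuousAt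
  have hφpos : ∀ u > 0, 0 < φ u := fun u hu => div_pos hu (hden u)
  have hS0 : S 0 = 0 := intervalIntegral.integral_same
  have hSm : StrictMonoOn S (Ici 0) := by
    refine strictMonoOn_of_hasDerivWithinAt_pos (convex_Ici 0) hSc.continuousOn
      (fun x _ => (hSd x).hasDerivWithinAt) fun x hx => hφpos x ?_
    rwa [interior_Ici] at hx
  have hSlin : ∀ u ≥ 1, (u - 1) / (c + β) ≤ S u := by
    intro u hu
    have hslope : ∀ x ∈ interior (Ici (1 : ℝ)), 1 / (c + β) ≤ deriv S x := by
      intro x hx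
      rw [interior_Ici, mem_Ioi] at hx
      rw [(hSd x).deriv]
      simp only [φ, abs_of_pos (zero_lt_one.trans hx)]
      have hx' : 0 < c + β * x := add_pos_of_pos_of_nonneg hc (mul_nonneg hβ (by linarith))
      rw [div_le_div_iff₀ (by positivity) hx', one_mul]
      nlinarith
    have := (convex_Ici 1).mul_sub_le_image_sub_of_le_deriv hSc.continuousOn
      (fun x _ => (hSd x).differentiableAt.differentiableWithinAt) hslope
      1 (mem_Ici.2 le_rfl) u hu hu
    have hS1 : 0 ≤ S 1 :=
      hS0 ▸ hSm.monotoneOn (mem_Ici.2 le_rfl) (mem_Ici.2 zero_le_one) zero_le_one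
    rw [div_eq_mul_one_div, mul_comm]
    linarith
  have hSsurj : SurjOn S (Ici 0) (Ici 0) := by
    intro y hy
    set b := 1 + (c + β) * y
    have hb : 1 ≤ b := le_add_of_nonneg_right (mul_nonneg (by positivity) hy)
    have hyb : y ≤ S b := by
      have := hSlin b hb
      rwa [show b - 1 = (c + β) * y by ring, mul_div_cancel_left₀ _ (by positivity)] at this
    obtain ⟨x, hx, hSx⟩ := intermediate_value_Icc (zero_le_one.trans hb) hSc.continuousOn
      ⟨by rw [hS0]; exact hy, hyb⟩
    exact ⟨x, hx.1, hSx⟩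
  obtain ⟨μ, hμc, hμm, hμ0, hμd⟩ := exists_inverse_of_strictMonoOn_Ici hSm hS0 hSsurj
    (fun u _ => hSd u) fun u hu => (hφpos u hu).ne'
  refine ⟨μ, hμc, hμm, hμ0, fun s hs => (hμd s hs).congr_deriv ?_⟩
  have hμs : 0 < μ s := hμ0 ▸ hμm (mem_Ici.2 le_rfl) (mem_Ici.2 hs.le) hs
  simp only [φ, abs_of_pos hμs, inv_div]
  field_simp

section Solutions

variable {lam β γ T : ℝ}

theorem IsSingularSol.hasDerivAt {μ : ℝ → ℝ} (h : IsSingularSol lam β γ T μ) :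
    ∀ s ∈ Ioo 0 T, HasDerivAt μ (γ ^ 2 / ((2 * lam + 1) * μ s) + β) s := fun s hs =>
  (h.2.2.2.2.2 s ⟨hs.1, hs.2.le⟩).hasDerivAt (Icc_mem_nhds hs.1 hs.2)

theorem IsEpsSol.continuousOn {ε : ℝ} {μ : ℝ → ℝ} (h : IsEpsSol lam β γ T ε μ) :
    ContinuousOn μ (Icc 0 T) := fun s hs => (h.2.2 s hs).continuousWithinAt

theorem IsEpsSol.hasDerivAt {ε : ℝ} {μ : ℝ → ℝ} (h : IsEpsSol lam β γ T ε μ) :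
    ∀ s ∈ Ioo 0 T, HasDerivAt μ
      (ε * μ s + γ ^ 2 * (1 + ε) ^ (2 * lam + 2) / ((2 * lam + 1) * μ s) + ε + β) s :=
  fun s hs => (h.2.2 s ⟨hs.1.le, hs.2.le⟩).hasDerivAt (Icc_mem_nhds hs.1 hs.2)

theorem exists_isSingularSol (hk : 0 < 2 * lam + 1) (hβ : 0 ≤ β) (hγ : 0 < γ) :
    ∃ μ : ℝ → ℝ, IsSingularSol lam β γ T μ := by
  obtain ⟨μ, hμc, hμm, hμ0, hμd⟩ :=
    exists_singular_solution (c := γ ^ 2 / (2 * lam + 1)) (by positivity) hβ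
  have hpos : ∀ s > 0, 0 < μ s := fun s hs => hμ0 ▸ hμm (mem_Ici.2 le_rfl) (mem_Ici.2 hs.le) hs
  refine ⟨μ, hμc.mono Icc_subset_Ici_self, hμm.mono Icc_subset_Ici_self, hμ0,
    fun s hs => ?_, fun s hs => hpos s hs.1, fun s hs => ?_⟩
  · rcases hs.1.eq_or_lt with rfl | hs
    exacts [hμ0.ge, (hpos s hs).le]
  · simpa only [div_div] using (hμd s hs.1).hasDerivWithinAt

theorem IsSingularSol.le {μ₁ μ₂ : ℝ → ℝ} (hk : 0 < 2 * lam + 1)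
    (h₁ : IsSingularSol lam β γ T μ₁) (h₂ : IsSingularSol lam β γ T μ₂) :
    ∀ s ∈ Icc 0 T, μ₁ s ≤ μ₂ s := by
  refine le_of_hasDerivAt_of_sub_le_mul_sub (L := 0) h₁.1 h₂.1 h₁.hasDerivAt h₂.hasDerivAt
    (by rw [h₁.2.2.1, h₂.2.2.1]) fun s hs hlt => ?_
  have hdiv : γ ^ 2 / ((2 * lam + 1) * μ₁ s) ≤ γ ^ 2 / ((2 * lam + 1) * μ₂ s) :=
    div_le_div_of_nonneg_left (sq_nonneg γ) (mul_pos hk (h₂.2.2.2.2.1 s ⟨hs.1, hs.2.le⟩))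
      (mul_le_mul_of_nonneg_left hlt.le hk.le)
  linarith

theorem IsEpsSol.le {ε₁ ε₂ : ℝ} {μ₁ μ₂ : ℝ → ℝ} (hk : 0 < 2 * lam + 1) (hε₁ : 0 ≤ ε₁)
    (hε : ε₁ ≤ ε₂) (h₁ : IsEpsSol lam β γ T ε₁ μ₁) (h₂ : IsEpsSol lam β γ T ε₂ μ₂) :
    ∀ s ∈ Icc 0 T, μ₁ s ≤ μ₂ s := by
  refine le_of_hasDerivAt_of_sub_le_mul_sub (L := ε₂) h₁.continuousOn h₂.continuousOn
    h₁.hasDerivAt h₂.hasDerivAt (by rw [h₁.1, h₂.1]; exact hε) fun s hs hlt => ?_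
  have hμ₁ : 0 < μ₁ s := h₁.2.1 s ⟨hs.1.le, hs.2.le⟩
  have hpow : (1 + ε₁) ^ (2 * lam + 2) ≤ (1 + ε₂) ^ (2 * lam + 2) :=
    Real.rpow_le_rpow (by linarith) (by linarith) (by linarith)
  have hdiv : γ ^ 2 * (1 + ε₁) ^ (2 * lam + 2) / ((2 * lam + 1) * μ₁ s) ≤
      γ ^ 2 * (1 + ε₂) ^ (2 * lam + 2) / ((2 * lam + 1) * μ₂ s) :=
    div_le_div₀ (mul_nonneg (sq_nonneg γ) (Real.rpow_nonneg (by linarith) _))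
      (mul_le_mul_of_nonneg_left hpow (sq_nonneg γ))
      (mul_pos hk (h₂.2.1 s ⟨hs.1.le, hs.2.le⟩)) (mul_le_mul_of_nonneg_left hlt.le hk.le)
  nlinarith

theorem IsSingularSol.le_isEpsSol {ε : ℝ} {μ₀ μ : ℝ → ℝ} (hk : 0 < 2 * lam + 1) (hε : 0 ≤ ε)
    (h₀ : IsSingularSol lam β γ T μ₀) (h : IsEpsSol lam β γ T ε μ) :
    ∀ s ∈ Icc 0 T, μ₀ s ≤ μ s := by
  refine le_of_hasDerivAt_of_sub_le_mul_sub (L := 0) h₀.1 h.continuousOn h₀.hasDerivAt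
    h.hasDerivAt (by rw [h₀.2.2.1, h.1]; exact hε) fun s hs hlt => ?_
  have hμ : 0 < μ s := h.2.1 s ⟨hs.1.le, hs.2.le⟩
  have hdiv : γ ^ 2 / ((2 * lam + 1) * μ₀ s) ≤
      γ ^ 2 * (1 + ε) ^ (2 * lam + 2) / ((2 * lam + 1) * μ s) :=
    calc γ ^ 2 / ((2 * lam + 1) * μ₀ s) ≤ γ ^ 2 / ((2 * lam + 1) * μ s) :=
          div_le_div_of_nonneg_left (sq_nonneg γ) (mul_pos hk hμ)
            (mul_le_mul_of_nonneg_left hlt.le hk.le)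
      _ ≤ γ ^ 2 / ((2 * lam + 1) * μ s) * (1 + ε) ^ (2 * lam + 2) :=
          le_mul_of_one_le_right (by positivity) (Real.one_le_rpow (by linarith) (by linarith))
      _ = γ ^ 2 * (1 + ε) ^ (2 * lam + 2) / ((2 * lam + 1) * μ s) := div_mul_eq_mul_div _ _ _
  nlinarith

-- `ν` is a supersolution of the `ε`-problem: `(1 + ε) ^ (lam + 1)` squares to the factor
-- `(1 + ε) ^ (2 * lam + 2)`, and `exp (ε t) ≥ 1` absorbs the remaining terms.
theorem IsEpsSol.le_exp_mul {ε : ℝ} {μ₀ μ : ℝ → ℝ} (hk : 0 < 2 * lam + 1) (hβ : 0 ≤ β)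
    (hε : 0 ≤ ε) (h₀ : IsSingularSol lam β γ T μ₀) (h : IsEpsSol lam β γ T ε μ) :
    ∀ t ∈ Icc 0 T, μ t ≤ Real.exp (ε * t) * ((1 + ε) ^ (lam + 1) * μ₀ t + ε + ε * t) := by
  set K := (1 + ε) ^ (lam + 1) with hK
  have hK1 : 1 ≤ K := Real.one_le_rpow (by linarith) (by linarith)
  have hKK : (1 + ε) ^ (2 * lam + 2) = K * K := by
    rw [hK, ← Real.rpow_add (by linarith)]
    ring_nf
  set ν : ℝ → ℝ := fun t => Real.exp (ε * t) * (K * μ₀ t + ε + ε * t)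
  have hνd : ∀ t ∈ Ioo 0 T, HasDerivAt ν (ε * ν t + Real.exp (ε * t) *
      (K * (γ ^ 2 / ((2 * lam + 1) * μ₀ t) + β) + ε)) t := fun t ht => by
    have hexp := ((hasDerivAt_id t).const_mul ε).exp
    have hlin := ((((h₀.hasDerivAt t ht).const_mul K).add_const ε).add
      ((hasDerivAt_id t).const_mul ε))
    exact (hexp.mul hlin).congr_deriv (by simp only [ν, id, Pi.add_apply]; ring)
  have hνc : ContinuousOn ν (Icc 0 T) :=
    (by fun_prop : Continuous fun t => Real.exp (ε * t)).continuousOn.mul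
      (((h₀.1.const_smul K).add continuousOn_const).add (by fun_prop))
  refine le_of_hasDerivAt_of_sub_le_mul_sub (L := ε) h.continuousOn hνc h.hasDerivAt hνd
    (by simp [h.1, h₀.2.2.1]) fun t ht hlt => ?_
  set E := Real.exp (ε * t)
  have hE1 : 1 ≤ E := Real.one_le_exp (mul_nonneg hε ht.1.le)
  have hμ₀ : 0 < μ₀ t := h₀.2.2.2.2.1 t ⟨ht.1, ht.2.le⟩
  have hν : E * (K * μ₀ t) ≤ ν t :=
    mul_le_mul_of_nonneg_left (by nlinarith [ht.1]) (by positivity)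
  have hdiv : γ ^ 2 * (1 + ε) ^ (2 * lam + 2) / ((2 * lam + 1) * μ t) ≤
      E * (K * (γ ^ 2 / ((2 * lam + 1) * μ₀ t))) :=
    calc γ ^ 2 * (1 + ε) ^ (2 * lam + 2) / ((2 * lam + 1) * μ t)
        ≤ γ ^ 2 * (K * K) / ((2 * lam + 1) * (E * (K * μ₀ t))) := by
          rw [hKK]
          exact div_le_div_of_nonneg_left (by positivity) (by positivity)
            (mul_le_mul_of_nonneg_left (hν.trans hlt.le) hk.le)
      _ = E⁻¹ * (K * (γ ^ 2 / ((2 * lam + 1) * μ₀ t))) := by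
          field_simp
      _ ≤ E * (K * (γ ^ 2 / ((2 * lam + 1) * μ₀ t))) :=
          mul_le_mul_of_nonneg_right ((inv_le_one_of_one_le₀ hE1).trans hE1) (by positivity)
  have hβE : β ≤ E * (K * β) := le_mul_of_one_le_left (by positivity) hE1 |>.trans'
    (le_mul_of_one_le_left hβ hK1)
  have hεE : ε ≤ E * ε := le_mul_of_one_le_left hε hE1
  nlinarith

theorem IsSingularSol.tendsto_isEpsSol {μ₀ : ℝ → ℝ} {μ : ℝ → ℝ → ℝ} (hk : 0 < 2 * lam + 1)
    (hβ : 0 ≤ β) (h₀ : IsSingularSol lam β γ T μ₀)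
    (h : ∀ ε : ℝ, 0 < ε → IsEpsSol lam β γ T ε (μ ε)) :
    ∀ s ∈ Icc 0 T, Tendsto (fun ε => μ ε s) (𝓝[>] 0) (𝓝 (μ₀ s)) := by
  intro s hs
  have hrpow : Continuous fun x : ℝ => x ^ (lam + 1) := Real.continuous_rpow_const (by linarith)
  have hbound : Continuous fun ε : ℝ =>
      Real.exp (ε * s) * ((1 + ε) ^ (lam + 1) * μ₀ s + ε + ε * s) := by fun_prop
  have hlim := (hbound.tendsto 0).mono_left (nhdsWithin_le_nhds (s := Ioi 0))
  simp only [zero_mul, Real.exp_zero, add_zero, Real.one_rpow, one_mul] at hlim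
  refine tendsto_of_tendsto_of_tendsto_of_le_of_le' tendsto_const_nhds hlim ?_ ?_ <;>
    filter_upwards [self_mem_nhdsWithin] with ε hε
  exacts [h₀.le_isEpsSol hk hε.le (h ε hε) s hs, (h ε hε).le_exp_mul hk hβ hε.le h₀ s hs]

end Solutions

theorem stmt_16_general (lam β γ T : ℝ) (hlam : lam ∈ Set.Ioo (0 : ℝ) (1 / 2))
    (hβ : 0 ≤ β) (hγ : 0 < γ) :
    (∃ μ0 : ℝ → ℝ, IsSingularSol lam β γ T μ0) ∧
    (∀ μ1 μ2 : ℝ → ℝ, IsSingularSol lam β γ T μ1 → IsSingularSol lam β γ T μ2 →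
      Set.EqOn μ1 μ2 (Set.Icc 0 T)) ∧
    (∀ ε₁ ε₂ : ℝ, ∀ μ1 μ2 : ℝ → ℝ, 0 < ε₁ → ε₁ ≤ ε₂ →
      IsEpsSol lam β γ T ε₁ μ1 → IsEpsSol lam β γ T ε₂ μ2 →
      ∀ s ∈ Set.Icc 0 T, μ1 s ≤ μ2 s) ∧
    (∀ μ0 : ℝ → ℝ, IsSingularSol lam β γ T μ0 →
      ∀ μf : ℝ → ℝ → ℝ, (∀ ε : ℝ, 0 < ε → IsEpsSol lam β γ T ε (μf ε)) →
      ∀ s ∈ Set.Icc 0 T,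
        Filter.Tendsto (fun ε => μf ε s) (nhdsWithin 0 (Set.Ioi 0)) (nhds (μ0 s))) := by
  have hk : 0 < 2 * lam + 1 := by linarith [hlam.1]
  exact ⟨exists_isSingularSol hk hβ hγ,
    fun μ₁ μ₂ h₁ h₂ s hs => (h₁.le hk h₂ s hs).antisymm (h₂.le hk h₁ s hs),
    fun ε₁ ε₂ μ₁ μ₂ hε₁ hε h₁ h₂ => h₁.le hk hε₁.le hε h₂,
    fun μ₀ h₀ μ h => h₀.tendsto_isEpsSol hk hβ h⟩

/-- ODEs (4.12)/(4.14): (a) the singular IVP has a solution `μ⁰`, unique on `[0,T]`;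
(b) the solutions `μ_ε` of the `ε`-IVPs are monotone in `ε` and converge pointwise on
`[0,T]` to `μ⁰` as `ε → 0⁺`. -/
theorem stmt_16 (lam β γ T : ℝ) (hlam : lam ∈ Set.Ioo (0 : ℝ) (1 / 2))
    (hβ : 0 ≤ β) (hγ : 0 < γ) (hT : 0 < T) :
    (∃ μ0 : ℝ → ℝ, IsSingularSol lam β γ T μ0) ∧
    (∀ μ1 μ2 : ℝ → ℝ, IsSingularSol lam β γ T μ1 → IsSingularSol lam β γ T μ2 →
      Set.EqOn μ1 μ2 (Set.Icc 0 T)) ∧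
    (∀ ε₁ ε₂ : ℝ, ∀ μ1 μ2 : ℝ → ℝ, 0 < ε₁ → ε₁ ≤ ε₂ →
      IsEpsSol lam β γ T ε₁ μ1 → IsEpsSol lam β γ T ε₂ μ2 →
      ∀ s ∈ Set.Icc 0 T, μ1 s ≤ μ2 s) ∧
    (∀ μ0 : ℝ → ℝ, IsSingularSol lam β γ T μ0 →
      ∀ μf : ℝ → ℝ → ℝ, (∀ ε : ℝ, 0 < ε → IsEpsSol lam β γ T ε (μf ε)) →
      ∀ s ∈ Set.Icc 0 T,
        Filter.Tendsto (fun ε => μf ε s) (nhdsWithin 0 (Set.Ioi 0)) (nhds (μ0 s))) :=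
  stmt_16_general lam β γ T hlam hβ hγ
end

section
/- There exists a universal constant K > 0 such that for all x, y > 0: 2·x·y·√(|ln y|) ≤ 2·x²·( |ln x| + K ) + (3/4)·y². -/
/-!
Write `ln y = ln x + ln (y / x)`. Since `√·` is subadditive, the left side splits into
`2xy√|ln x|`, which AM–GM bounds by `2x²|ln x| + y²/2`, and `x² · 2t√|ln t|` with `t = y / x`.
The function `2t√|ln t| - t²/4` is bounded on `(0, ∞)` because `|ln t| ≤ t + 1/t`, so the
second part is at most `2Kx² + y²/4`.
-/

open Real

lemma Real.sqrt_add_le_add_sqrt {a b : ℝ} (ha : 0 ≤ a) (hb : 0 ≤ b) :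
    √(a + b) ≤ √a + √b := by
  rw [sqrt_le_left (by positivity), add_sq, sq_sqrt ha, sq_sqrt hb]
  nlinarith [mul_nonneg (sqrt_nonneg a) (sqrt_nonneg b)]

lemma Real.sqrt_abs_log_mul_le {a b : ℝ} (ha : a ≠ 0) (hb : b ≠ 0) :
    √|log (a * b)| ≤ √|log a| + √|log b| := by
  rw [log_mul ha hb]
  exact (sqrt_le_sqrt (abs_add_le _ _)).trans (sqrt_add_le_add_sqrt (abs_nonneg _) (abs_nonneg _))

lemma Real.abs_log_le_add_inv {t : ℝ} (ht : 0 < t) : |log t| ≤ t + t⁻¹ := by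
  have hpos := log_le_sub_one_of_pos ht
  have hneg := log_le_sub_one_of_pos (inv_pos.mpr ht)
  rw [log_inv] at hneg
  have : 0 < t⁻¹ := inv_pos.mpr ht
  rw [abs_le]
  constructor <;> linarith

lemma Real.two_mul_mul_sqrt_abs_log_le {t : ℝ} (ht : 0 < t) :
    2 * t * √|log t| ≤ 1024 + t ^ 2 / 4 := by
  have hsq : (2 * t * √|log t|) ^ 2 ≤ 4 * (t ^ 3 + t) := by
    have hlog := mul_le_mul_of_nonneg_left (abs_log_le_add_inv ht) (sq_nonneg t)
    rw [mul_pow, sq_sqrt (abs_nonneg _)]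
    field_simp at hlog ⊢
    nlinarith
  refine (pow_le_pow_iff_left₀ (by positivity) (by positivity) two_ne_zero).mp (hsq.trans ?_)
  nlinarith [sq_nonneg (t - 8), sq_nonneg (t ^ 2 - 16 * t), ht.le]

/-- Inequality (5.17): there is a universal constant `K > 0` such that for all `x, y > 0`,
`2·x·y·√(|ln y|) ≤ 2·x²·(|ln x| + K) + (3/4)·y²`. -/
theorem stmt_17 :
    ∃ K : ℝ, 0 < K ∧ ∀ x y : ℝ, 0 < x → 0 < y →
      2 * x * y * Real.sqrt |Real.log y| ≤
        2 * x ^ 2 * (|Real.log x| + K) + 3 / 4 * y ^ 2 := by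
  refine ⟨512, by norm_num, fun x y hx hy => ?_⟩
  have hsplit : √|log y| ≤ √|log x| + √|log (y / x)| := by
    simpa [mul_div_cancel₀ y hx.ne'] using
      sqrt_abs_log_mul_le hx.ne' (div_pos hy hx).ne'
  have hAMGM : 2 * x * y * √|log x| ≤ 2 * x ^ 2 * |log x| + y ^ 2 / 2 := by
    nlinarith [sq_sqrt (abs_nonneg (log x)), sq_nonneg (2 * x * √|log x| - y)]
  have hratio : 2 * x * y * √|log (y / x)| ≤ 1024 * x ^ 2 + y ^ 2 / 4 := by
    have h := mul_le_mul_of_nonneg_left (two_mul_mul_sqrt_abs_log_le (div_pos hy hx)) (sq_nonneg x)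
    field_simp at h
    linarith
  linarith [mul_le_mul_of_nonneg_left hsplit (by positivity : 0 ≤ 2 * x * y)]
end
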